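/- Let κ be a cardinal and X a Hausdorff topological space. Assume there is an open cover 𝒰 of X such that for every subfamily 𝒱 ⊆ 𝒰 with |𝒱| < κ we have ⋃{closure(V) : V ∈ 𝒱} ≠ X. Then X contains a strongly right separated subspace of cardinality κ, i.e., a subset S with |S| = κ such that S with the subspace topology is strongly right separated. -/
import Mathlib


universe u

open Set

/-- A topological space is *strongly right separated* if it has a well-ordering `r` such that
every point `x` has a closed neighborhood `W x` (a closed set containing `x` in its interior)
containing no `r`-successor of `x`. -/
def StronglyRightSeparated (Y : Type u) [TopologicalSpace Y] : Prop :=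
  ∃ r : Y → Y → Prop, IsWellOrder Y r ∧
    ∃ W : Y → Set Y, ∀ x : Y, IsClosed (W x) ∧ x ∈ interior (W x) ∧
      ∀ y : Y, r x y → y ∉ W x

/-- A general recursion principle along a well-ordered type. -/
lemma exists_fun_rec {T X : Type u} [LinearOrder T] [WellFoundedLT T]
    (P : ∀ α : T, ({β : T // β < α} → X) → X → Prop)
    (h : ∀ α g, ∃ x, P α g x) :
    ∃ f : T → X, ∀ α, P α (fun b => f b.1) (f α) := by
  classical
  let F : T → X := IsWellFounded.fix (· < ·)
    (fun α ih => Classical.choose (h α (fun b => ih b.1 b.2)))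
  have hF : ∀ α, F α = Classical.choose (h α (fun b => F b.1)) := by
    intro α
    exact IsWellFounded.fix_eq (· < ·) _ α
  refine ⟨F, fun α => ?_⟩
  rw [hF α]
  exact Classical.choose_spec (h α (fun b => F b.1))

/-- If a Hausdorff space `X` has an open cover `𝒰` such that for every subfamily
`𝒱 ⊆ 𝒰` of cardinality `< κ` the closures of the members of `𝒱` do not cover `X`, then `X`
contains a strongly right separated subspace of cardinality `κ`. -/
theorem stmt3 (κ : Cardinal.{u}) {X : Type u} [TopologicalSpace X] [T2Space X]
    (𝒰 : Set (Set X)) (hopen : ∀ U ∈ 𝒰, IsOpen U) (hcover : ⋃₀ 𝒰 = Set.univ)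
    (hsmall : ∀ 𝒱 ⊆ 𝒰, Cardinal.mk 𝒱 < κ → (⋃ V ∈ 𝒱, closure V) ≠ Set.univ) :
    ∃ S : Set X, Cardinal.mk S = κ ∧ StronglyRightSeparated S := by
  classical
  have hU : ∀ x : X, ∃ U ∈ 𝒰, x ∈ U := by
    intro x
    have : x ∈ ⋃₀ 𝒰 := by rw [hcover]; trivial
    simpa [mem_sUnion] using this
  choose U hUmem hUx using hU
  set T := κ.ord.ToType with hT
  obtain ⟨f, hf⟩ := exists_fun_rec
    (T := T) (X := X)
    (fun α g x => ∀ b : {β : T // β < α}, x ∉ closure (U (g b)))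
    (by
      intro α g
      set 𝒱 : Set (Set X) := range (fun b : {β : T // β < α} => U (g b)) with h𝒱
      have hsub : 𝒱 ⊆ 𝒰 := by rintro _ ⟨b, rfl⟩; exact hUmem _
      have hcard : Cardinal.mk 𝒱 < κ := by
        refine lt_of_le_of_lt (Cardinal.mk_range_le) ?_
        exact Cardinal.mk_Iio_ord_toType α
      have := hsmall 𝒱 hsub hcard
      rw [ne_eq, eq_univ_iff_forall] at this
      push_neg at this
      obtain ⟨x, hx⟩ := this
      refine ⟨x, fun b hb => hx ?_⟩
      exact mem_biUnion ⟨b, rfl⟩ hb)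
  -- f is injective
  have hinj : Function.Injective f := by
    intro a b hab
    by_contra hne
    rcases lt_or_gt_of_ne hne with h | h
    · exact hf b ⟨a, h⟩ (hab ▸ subset_closure (hUx (f a)))
    · exact hf a ⟨b, h⟩ (hab.symm ▸ subset_closure (hUx (f b)))
  refine ⟨range f, ?_, ?_⟩
  · rw [Cardinal.mk_range_eq f hinj]
    exact Cardinal.mk_ord_toType κ
  · set e : T ≃ range f := Equiv.ofInjective f hinj with he
    have hev : ∀ x : range f, f (e.symm x) = (x : X) := by
      intro x
      have := e.apply_symm_apply x
      exact congrArg Subtype.val this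
    refine ⟨fun x y => e.symm x < e.symm y, ?_, ?_⟩
    · let emb : (fun x y : range f => e.symm x < e.symm y) ↪r ((· < ·) : T → T → Prop) :=
        ⟨e.symm.toEmbedding, Iff.rfl⟩
      haveI : IsWellOrder T (· < ·) := isWellOrder_lt
      exact emb.isWellOrder
    · refine ⟨fun x => Subtype.val ⁻¹' closure (U x), fun x => ⟨?_, ?_, ?_⟩⟩
      · exact isClosed_closure.preimage continuous_subtype_val
      · refine mem_of_mem_of_subset ?_ (interior_maximal ?_ ?_)
          (s := Subtype.val ⁻¹' (U x))
        · exact hUx (x : X)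
        · exact preimage_mono subset_closure
        · exact (hopen _ (hUmem _)).preimage continuous_subtype_val
      · intro y hr hy
        have h1 : f (e.symm y) ∉ closure (U (f (e.symm x))) := hf (e.symm y) ⟨e.symm x, hr⟩
        rw [hev x, hev y] at h1
        exact h1 hy
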